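/- arXiv:2009.01996 — 4 statements merged into one kernel-verified Lean document; each statement's English description precedes it below -/
import Mathlib

section
/- Let G be a graph of size q admitting a local antimagic labeling f (a bijection from E(G) to {1,...,q} such that adjacent vertices receive distinct induced sums) whose induced vertex labeling takes exactly two values x and y with x < y. Let X and Y be the numbers of vertices with induced label x and y respectively. Then G is bipartite with parts of sizes X and Y, X > Y, and xX = yY = q(q+1)/2. -/
/-!
Adjacent vertices carry different induced labels, so each of the two label classes contains
exactly one endpoint of every edge. Summing the induced labels over either class therefore
counts every edge label once, which gives `x X = y Y = 1 + ⋯ + q`; as `x < y`, this forces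
`X > Y`.
-/

open Finset

namespace LocalAntimagic

variable {V : Type*} [Fintype V] [DecidableEq V]

/-- The induced vertex label: sum of labels of edges incident to `v`. -/
def inducedSum (G : SimpleGraph V) [DecidableRel G.Adj] (f : Sym2 V → ℕ) (v : V) : ℕ :=
  ∑ e ∈ G.incidenceFinset v, f e

/-- `f` is a local antimagic labeling of `G`: a bijection from the edge set onto
`{1, …, q}` (`q` the number of edges) such that adjacent vertices get distinct
induced sums. -/
def IsLocalAntimagic (G : SimpleGraph V) [DecidableRel G.Adj] (f : Sym2 V → ℕ) : Prop :=
  Set.BijOn f G.edgeSet (Set.Icc 1 G.edgeFinset.card) ∧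
  ∀ ⦃u v⦄, G.Adj u v → inducedSum G f u ≠ inducedSum G f v

/-- The number of distinct induced vertex labels under `f`. -/
def colorCount (G : SimpleGraph V) [DecidableRel G.Adj] (f : Sym2 V → ℕ) : ℕ :=
  (Finset.image (inducedSum G f) Finset.univ).card

/-- The local antimagic chromatic number of `G` (`⊤` if no local antimagic
labeling exists). -/
noncomputable def chiLA (G : SimpleGraph V) [DecidableRel G.Adj] : ℕ∞ :=
  sInf {n : ℕ∞ | ∃ f : Sym2 V → ℕ, IsLocalAntimagic G f ∧ (colorCount G f : ℕ∞) = n}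

/-- The circulant graph on `ℤ/nℤ` with connection set `S`. -/
def circulant (n : ℕ) [NeZero n] (S : Finset (ZMod n)) : SimpleGraph (ZMod n) where
  Adj u v := u ≠ v ∧ (u - v ∈ S ∨ v - u ∈ S)
  symm := ⟨fun u v h => ⟨h.1.symm, h.2.symm⟩⟩
  loopless := ⟨fun v h => h.1 rfl⟩

instance (n : ℕ) [NeZero n] (S : Finset (ZMod n)) : DecidableRel (circulant n S).Adj :=
  fun u v => inferInstanceAs (Decidable (u ≠ v ∧ (u - v ∈ S ∨ v - u ∈ S)))

/-- The cycle `C_n` as a circulant graph on `ℤ/nℤ`. -/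
def cycle (n : ℕ) [NeZero n] : SimpleGraph (ZMod n) := circulant n {1}

instance (n : ℕ) [NeZero n] : DecidableRel (cycle n).Adj :=
  inferInstanceAs (DecidableRel (circulant n {1}).Adj)

/-- The graph obtained from `G` by merging vertices according to the
identification map `q` (adjacent iff distinct and some preimages are adjacent). -/
def mergeGraph {V' W : Type*} (G : SimpleGraph V') (q : V' → W) : SimpleGraph W where
  Adj a b := a ≠ b ∧ ∃ u v, q u = a ∧ q v = b ∧ G.Adj u v
  symm := by
    constructor
    rintro a b ⟨hab, u, v, hu, hv, huv⟩
    exact ⟨hab.symm, v, u, hv, hu, huv.symm⟩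
  loopless := ⟨fun a h => h.1 rfl⟩

end LocalAntimagic

namespace LocalAntimagic

theorem sum_Icc_one_id (n : ℕ) : ∑ i ∈ Icc 1 n, i = n * (n + 1) / 2 := by
  have := Finset.sum_range_id (n + 1)
  rwa [Finset.range_eq_Ico, Finset.sum_eq_sum_Ico_succ_bot (by omega : 0 < n + 1), zero_add,
    zero_add, Ico_add_one_right_eq_Icc, add_tsub_cancel_right, mul_comm] at this

theorem sum_eq_of_bijOn_Icc_one_card {α : Type*} {s : Finset α} {f : α → ℕ}
    (hf : Set.BijOn f s (Set.Icc 1 #s)) : ∑ a ∈ s, f a = #s * (#s + 1) / 2 := by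
  rw [← sum_Icc_one_id]
  rw [← coe_Icc] at hf
  exact Finset.sum_nbij f (fun a ha => hf.mapsTo ha) hf.injOn hf.surjOn fun _ _ => rfl

variable {V : Type*} [Fintype V] {G : SimpleGraph V}

theorem colorable_card_image {α : Type*} [DecidableEq α] (c : V → α)
    (hc : ∀ ⦃u v⦄, G.Adj u v → c u ≠ c v) : G.Colorable #(univ.image c) := by
  simpa using (SimpleGraph.Coloring.mk (fun v => (⟨c v, mem_image_of_mem c (mem_univ v)⟩ :
    univ.image c)) fun huv h => hc huv (congrArg Subtype.val h)).colorable

variable [DecidableEq V] [DecidableRel G.Adj]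

theorem sum_inducedSum_of_adj_mem_iff_notMem (f : Sym2 V → ℕ) {S : Finset V}
    (hS : ∀ ⦃u v⦄, G.Adj u v → (u ∈ S ↔ v ∉ S)) :
    ∑ v ∈ S, inducedSum G f v = ∑ e ∈ G.edgeFinset, f e := by
  have hcard : ∀ e ∈ G.edgeFinset, #{v ∈ S | v ∈ e} = 1 := by
    intro e he
    induction e with
    | h u v =>
      have huv : G.Adj u v := SimpleGraph.mem_edgeFinset.mp he
      rw [card_eq_one]
      by_cases hu : u ∈ S
      · exact ⟨u, by ext w; have := (hS huv).mp hu; aesop⟩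
      · exact ⟨v, by ext w; have := not_not.mp (mt (hS huv).mpr hu); aesop⟩
  calc ∑ v ∈ S, inducedSum G f v
      = ∑ v ∈ S, ∑ e ∈ G.edgeFinset, if v ∈ e then f e else 0 := by
        simp only [inducedSum, SimpleGraph.incidenceFinset_eq_filter, sum_filter]
    _ = ∑ e ∈ G.edgeFinset, #{v ∈ S | v ∈ e} * f e := by
        rw [sum_comm]
        simp only [← sum_filter, sum_const, smul_eq_mul]
    _ = ∑ e ∈ G.edgeFinset, f e := sum_congr rfl fun e he => by rw [hcard e he, one_mul]

theorem mul_card_filter_inducedSum_eq (f : Sym2 V → ℕ) {a : ℕ}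
    (ha : ∀ ⦃u v⦄, G.Adj u v → (inducedSum G f u = a ↔ inducedSum G f v ≠ a)) :
    a * #{v | inducedSum G f v = a} = ∑ e ∈ G.edgeFinset, f e := by
  rw [← sum_inducedSum_of_adj_mem_iff_notMem f (S := {v | inducedSum G f v = a})
    (by simpa using ha), sum_const_nat fun v hv => (mem_filter.mp hv).2, mul_comm]

end LocalAntimagic

open LocalAntimagic in
theorem stmt0_general {V : Type*} [Fintype V] [DecidableEq V] (G : SimpleGraph V)
    [DecidableRel G.Adj] (f : Sym2 V → ℕ)
    (hf : IsLocalAntimagic G f) (x y : ℕ) (hxy : x < y)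
    (hvals : Finset.image (inducedSum G f) Finset.univ = {x, y}) :
    G.Colorable 2 ∧
    (∀ u v, G.Adj u v → (inducedSum G f u = x ↔ inducedSum G f v = y)) ∧
    (Finset.univ.filter fun v => inducedSum G f v = x).card >
      (Finset.univ.filter fun v => inducedSum G f v = y).card ∧
    x * (Finset.univ.filter fun v => inducedSum G f v = x).card =
      G.edgeFinset.card * (G.edgeFinset.card + 1) / 2 ∧
    y * (Finset.univ.filter fun v => inducedSum G f v = y).card =
      G.edgeFinset.card * (G.edgeFinset.card + 1) / 2 := by
  obtain ⟨hbij, hne⟩ := hf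
  have hval (v : V) : inducedSum G f v = x ∨ inducedSum G f v = y := by
    simpa [hvals] using mem_image_of_mem (inducedSum G f) (mem_univ v)
  have hside : ∀ a ∈ ({x, y} : Finset ℕ), ∀ ⦃u v⦄, G.Adj u v →
      (inducedSum G f u = a ↔ inducedSum G f v ≠ a) := by
    intro a ha u v huv
    have := hne huv
    rcases hval u with hu | hu <;> rcases hval v with hv | hv <;> simp at ha <;> omega
  have hsum : ∑ e ∈ G.edgeFinset, f e = #G.edgeFinset * (#G.edgeFinset + 1) / 2 :=
    sum_eq_of_bijOn_Icc_one_card (SimpleGraph.coe_edgeFinset G ▸ hbij)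
  have hX := (mul_card_filter_inducedSum_eq f (hside x (by simp))).trans hsum
  have hY := (mul_card_filter_inducedSum_eq f (hside y (by simp))).trans hsum
  have hYpos : 0 < #{v | inducedSum G f v = y} := by
    obtain ⟨v, -, hv⟩ := mem_image.mp (hvals ▸ mem_insert_of_mem (mem_singleton_self y))
    exact card_pos.mpr ⟨v, mem_filter.mpr ⟨mem_univ v, hv⟩⟩
  refine ⟨?_, fun u v huv => ?_, ?_, hX, hY⟩
  · simpa [hvals, hxy.ne] using colorable_card_image (inducedSum G f) hne
  · rw [hside x (by simp) huv]
    rcases hval v with hv | hv <;> omega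
  · exact Nat.lt_of_mul_lt_mul_left (a := x)
      (hX.trans hY.symm ▸ Nat.mul_lt_mul_of_pos_right hxy hYpos)

open LocalAntimagic in
/-- two-value local antimagic labelings force a bipartition with
`X > Y` and `xX = yY = q(q+1)/2`. -/
theorem stmt0 {V : Type*} [Fintype V] [DecidableEq V] (G : SimpleGraph V)
    [DecidableRel G.Adj] (hconn : G.Connected) (f : Sym2 V → ℕ)
    (hf : IsLocalAntimagic G f) (x y : ℕ) (hxy : x < y)
    (hvals : Finset.image (inducedSum G f) Finset.univ = {x, y}) :
    G.Colorable 2 ∧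
    (∀ u v, G.Adj u v → (inducedSum G f u = x ↔ inducedSum G f v = y)) ∧
    (Finset.univ.filter fun v => inducedSum G f v = x).card >
      (Finset.univ.filter fun v => inducedSum G f v = y).card ∧
    x * (Finset.univ.filter fun v => inducedSum G f v = x).card =
      G.edgeFinset.card * (G.edgeFinset.card + 1) / 2 ∧
    y * (Finset.univ.filter fun v => inducedSum G f v = y).card =
      G.edgeFinset.card * (G.edgeFinset.card + 1) / 2 :=
  stmt0_general G f hf x y hxy hvals
end

section
/- Suppose G is a connected bipartite graph with q edges and bipartition (V₁, V₂). If the local antimagic chromatic number of G equals 2, then |V₁| ≠ |V₂| and q(q+1)/2 is divisible by both |V₁| and |V₂|. -/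
open Finset

/-
If `χ_la(G) = 2`, a local antimagic labeling with two induced labels is a proper 2-colouring of
the connected bipartite graph `G`, so it is constant on each part: `a` on `V₁` and `b ≠ a` on
`V₂`. Since every edge has exactly one end in each part, summing the induced labels over either
part counts every edge label once, giving `|V₁| a = |V₂| b = 1 + ⋯ + q = q(q+1)/2`.
-/

namespace SimpleGraph

variable {V α : Type*} {G : SimpleGraph V}

theorem Preconnected.iff_of_forall_adj (hG : G.Preconnected) {p : V → Prop}
    (hp : ∀ ⦃u v⦄, G.Adj u v → (p u ↔ p v)) (u v : V) : p u ↔ p v := by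
  obtain ⟨w⟩ := hG u v
  induction w with
  | nil => rfl
  | cons h _ ih => exact (hp h).trans ih

theorem IsBipartiteWith.mem_iff_notMem_of_adj {s t : Set V} (h : G.IsBipartiteWith s t)
    {u v : V} (huv : G.Adj u v) : u ∈ s ↔ v ∉ s := by
  rcases h.mem_of_adj huv with ⟨hu, hv⟩ | ⟨hu, hv⟩
  · exact iff_of_true hu (Set.disjoint_left.mp h.disjoint.symm hv)
  · exact iff_of_false (Set.disjoint_left.mp h.disjoint.symm hu) (not_not.mpr hv)

/-- Along an edge, both "lies in `s`" and "has colour `a`" change their truth value, so whether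
they agree is invariant along walks. -/
theorem IsBipartiteWith.apply_eq_of_mem {s t : Set V} (h : G.IsBipartiteWith s t)
    (hG : G.Preconnected) {c : V → α} (hc : ∀ ⦃u v⦄, G.Adj u v → c u ≠ c v) {a b : α}
    (hab : ∀ v, c v = a ∨ c v = b) {u v : V} (hu : u ∈ s) (hv : v ∈ s) : c u = c v := by
  have hflip : ∀ ⦃x y⦄, G.Adj x y → ((x ∈ s ↔ c x = a) ↔ (y ∈ s ↔ c y = a)) := by
    intro x y hxy
    have hs := h.mem_iff_notMem_of_adj hxy
    have hca : c x = a ↔ c y ≠ a := by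
      have := hc hxy
      rcases hab x with hx | hx <;> rcases hab y with hy | hy <;> simp_all [eq_comm]
    tauto
  have := hG.iff_of_forall_adj hflip u v
  rcases hab u with hu' | hu' <;> rcases hab v with hv' | hv' <;> simp_all

end SimpleGraph

theorem Finset.sum_Icc_one_id (q : ℕ) : ∑ i ∈ Icc 1 q, i = q * (q + 1) / 2 := by
  have h := Finset.sum_range_id (q + 1)
  rwa [Nat.range_succ_eq_Icc_zero, ← insert_Icc_add_one_left_eq_Icc q.zero_le,
    sum_insert (by simp), zero_add, add_tsub_cancel_right, mul_comm] at h

namespace LocalAntimagic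

open SimpleGraph

variable {V : Type*} [Fintype V] [DecidableEq V] {G : SimpleGraph V} [DecidableRel G.Adj]
  {f : Sym2 V → ℕ}

theorem exists_isLocalAntimagic_colorCount_eq {n : ℕ} (h : chiLA G = n) :
    ∃ f, IsLocalAntimagic G f ∧ colorCount G f = n := by
  have hne : {m : ℕ∞ | ∃ f, IsLocalAntimagic G f ∧ (colorCount G f : ℕ∞) = m}.Nonempty := by
    by_contra hemp
    rw [Set.not_nonempty_iff_eq_empty] at hemp
    simp [chiLA, hemp] at h
  obtain ⟨f, hf, hcount⟩ := csInf_mem hne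
  exact ⟨f, hf, by exact_mod_cast hcount.trans h⟩

theorem IsLocalAntimagic.sum_edgeFinset (hf : IsLocalAntimagic G f) :
    ∑ e ∈ G.edgeFinset, f e = #G.edgeFinset * (#G.edgeFinset + 1) / 2 := by
  rw [← Finset.sum_Icc_one_id]
  exact Finset.sum_nbij f (fun e he => by simpa using hf.1.mapsTo (by simpa using he))
    (by simpa using hf.1.injOn) (by simpa using hf.1.surjOn) fun _ _ => rfl

theorem sum_inducedSum_of_isBipartiteWith {s : Finset V} {t : Set V}
    (h : G.IsBipartiteWith s t) (f : Sym2 V → ℕ) :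
    ∑ v ∈ s, inducedSum G f v = ∑ e ∈ G.edgeFinset, f e := by
  have hdisj : (s : Set V).PairwiseDisjoint fun v => G.incidenceFinset v := by
    intro u hu v hv huv
    refine Finset.disjoint_left.mpr fun e heu hev => ?_
    have hadj := G.adj_of_mem_incidenceSet huv ((G.mem_incidenceFinset u e).mp heu)
      ((G.mem_incidenceFinset v e).mp hev)
    exact (h.mem_iff_notMem_of_adj hadj).mp hu hv
  have hcover : s.biUnion (fun v => G.incidenceFinset v) = G.edgeFinset := by
    ext e
    induction e with
    | h x y =>
      simp only [mem_biUnion, mem_incidenceFinset, incidenceSet, mem_edgeSet, mem_edgeFinset,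
        Set.mem_ofPred_eq]
      refine ⟨fun ⟨_, _, hxy, _⟩ => hxy, fun hxy => ?_⟩
      by_cases hx : x ∈ s
      · exact ⟨x, hx, hxy, Sym2.mem_mk_left x y⟩
      · exact ⟨y, (h.mem_iff_notMem_of_adj hxy.symm).mpr hx, hxy, Sym2.mem_mk_right x y⟩
  rw [← hcover, sum_biUnion hdisj]
  rfl

theorem IsLocalAntimagic.card_mul_inducedSum_eq (hf : IsLocalAntimagic G f)
    (hG : G.Preconnected) (hcount : colorCount G f = 2) {s : Finset V} {t : Set V}
    (h : G.IsBipartiteWith s t) {x : V} (hx : x ∈ s) :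
    #s * inducedSum G f x = #G.edgeFinset * (#G.edgeFinset + 1) / 2 := by
  obtain ⟨a, b, -, himage⟩ := card_eq_two.mp hcount
  have hval : ∀ v, inducedSum G f v = a ∨ inducedSum G f v = b := fun v => by
    simpa [colorCount, himage] using mem_image_of_mem (inducedSum G f) (mem_univ v)
  rw [← hf.sum_edgeFinset, ← sum_inducedSum_of_isBipartiteWith h, ← smul_eq_mul, ← sum_const]
  exact sum_congr rfl fun v hv => h.apply_eq_of_mem hG hf.2 hval hx hv

end LocalAntimagic

open LocalAntimagic in
theorem stmt1_general {V : Type*} [Fintype V] [DecidableEq V] (G : SimpleGraph V)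
    [DecidableRel G.Adj] (hconn : G.Connected)
    (V1 V2 : Finset V) (hdisj : Disjoint V1 V2)
    (hbip : ∀ u v, G.Adj u v → (u ∈ V1 ∧ v ∈ V2) ∨ (u ∈ V2 ∧ v ∈ V1))
    (h2 : chiLA G = 2) :
    V1.card ≠ V2.card ∧
    V1.card ∣ G.edgeFinset.card * (G.edgeFinset.card + 1) / 2 ∧
    V2.card ∣ G.edgeFinset.card * (G.edgeFinset.card + 1) / 2 := by
  obtain ⟨f, hf, hcount⟩ := exists_isLocalAntimagic_colorCount_eq (n := 2) h2
  have hG : G.IsBipartiteWith V1 V2 := ⟨disjoint_coe.mpr hdisj, hbip⟩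
  have : Nontrivial V := by
    rw [← Fintype.one_lt_card_iff_nontrivial, ← card_univ]
    exact (hcount ▸ one_lt_two : 1 < colorCount G f).trans_le card_image_le
  obtain ⟨u, w, huw, hu, hw⟩ : ∃ u w, G.Adj u w ∧ u ∈ V1 ∧ w ∈ V2 := by
    obtain ⟨y, hxy⟩ := hconn.preconnected.exists_adj_of_nontrivial (Classical.arbitrary V)
    rcases hbip _ _ hxy with ⟨hx, hy⟩ | ⟨hx, hy⟩
    exacts [⟨_, _, hxy, hx, hy⟩, ⟨_, _, hxy.symm, hy, hx⟩]
  have hV1 := hf.card_mul_inducedSum_eq hconn.preconnected hcount hG hu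
  have hV2 := hf.card_mul_inducedSum_eq hconn.preconnected hcount hG.symm hw
  refine ⟨fun hcard => hf.2 huw ?_, Dvd.intro _ hV1, Dvd.intro _ hV2⟩
  exact Nat.eq_of_mul_eq_mul_left (card_pos.mpr ⟨u, hu⟩) (hV1.trans (hcard ▸ hV2.symm))

open LocalAntimagic in
/-- if a connected bipartite graph has `χ_la = 2`, then the two
parts have distinct sizes, each dividing `q(q+1)/2`. -/
theorem stmt1 {V : Type*} [Fintype V] [DecidableEq V] (G : SimpleGraph V)
    [DecidableRel G.Adj] (hconn : G.Connected)
    (V1 V2 : Finset V) (hdisj : Disjoint V1 V2) (hcover : V1 ∪ V2 = Finset.univ)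
    (hbip : ∀ u v, G.Adj u v → (u ∈ V1 ∧ v ∈ V2) ∨ (u ∈ V2 ∧ v ∈ V1))
    (h2 : chiLA G = 2) :
    V1.card ≠ V2.card ∧
    V1.card ∣ G.edgeFinset.card * (G.edgeFinset.card + 1) / 2 ∧
    V2.card ∣ G.edgeFinset.card * (G.edgeFinset.card + 1) / 2 :=
  stmt1_general G hconn V1 V2 hdisj hbip h2
end

section
/- Suppose G is a connected bipartite graph of even size q that contains exactly one vertex of degree 1 (one pendant). Then the local antimagic chromatic number of G is at least 3. -/
open Finset

/-!
If `f` had only two induced values, the class `A` of vertices whose induced sum equals that of the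
pendant vertex `p` would contain exactly one endpoint of every edge. Summing `f⁺` over `A` counts
every label once, so `f⁺(p) · |A| = q(q+1)/2`; since `f⁺(p)` is a single label, `f⁺(p) ≤ q` and
hence `q + 1 ≤ 2|A|`. Summing degrees over `A` instead gives `q`, and every vertex of `A` other
than `p` has degree at least `2` (degree `0` gives `f⁺ = 0`, degree `1` would be a second pendant),
so `2|A| ≤ q + 1`. Thus `q = 2|A| - 1` is odd.
-/

theorem Finset.sum_Icc_id_mul_two (n : ℕ) : (∑ i ∈ Icc 1 n, i) * 2 = n * (n + 1) := by
  induction n with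
  | zero => rfl
  | succ n ih => rw [sum_Icc_succ_top (by omega), add_mul, ih]; ring

namespace SimpleGraph

variable {V : Type*} [Fintype V] {G : SimpleGraph V}

theorem isBipartiteWith_filter_eq_filter_ne {α : Type*} [DecidableEq α] (c : V → α)
    (hc : ∀ ⦃u w⦄, G.Adj u w → c u ≠ c w) (hcard : #(univ.image c) ≤ 2) {x : α}
    (hx : x ∈ univ.image c) :
    G.IsBipartiteWith ↑(univ.filter (c · = x)) ↑(univ.filter (c · ≠ x)) where
  disjoint := by
    rw [Finset.disjoint_coe]
    exact disjoint_filter_filter_not _ _ _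
  mem_of_adj u w huw := by
    simp only [coe_filter, mem_univ, true_and, Set.mem_ofPred_eq]
    by_cases hu : c u = x
    · exact Or.inl ⟨hu, hu ▸ (hc huw).symm⟩
    refine Or.inr ⟨hu, by_contra fun hw => ?_⟩
    have hsub : {x, c u, c w} ⊆ univ.image c := by
      simp only [insert_subset_iff, singleton_subset_iff, mem_image_univ_iff_mem_range,
        Set.mem_range_self, and_true]
      simpa using hx
    have := card_le_card hsub
    rw [card_insert_of_notMem (by simp [Ne.symm hu, Ne.symm hw]),
      card_pair (hc huw)] at this
    omega

variable [DecidableEq V] [DecidableRel G.Adj]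

theorem IsBipartiteWith.sum_sum_incidenceFinset {M : Type*} [AddCommMonoid M] {s t : Finset V}
    (h : G.IsBipartiteWith s t) (g : Sym2 V → M) :
    ∑ v ∈ s, ∑ e ∈ G.incidenceFinset v, g e = ∑ e ∈ G.edgeFinset, g e := by
  rw [sum_comm' (t' := G.edgeFinset) (s' := fun e => s.filter (· ∈ e)) (fun v e => by
    simp only [mem_incidenceFinset, incidenceSet, Set.mem_sep_iff, mem_filter, mem_edgeFinset]
    tauto)]
  refine sum_congr rfl fun e he => ?_
  induction e with
  | h u w =>
    have hsep : (u ∈ s ∧ w ∉ s) ∨ (u ∉ s ∧ w ∈ s) := by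
      rcases h.mem_of_adj (mem_edgeFinset.mp he) with ⟨hu, hw⟩ | ⟨hu, hw⟩
      · exact Or.inl ⟨hu, fun hw' => Set.disjoint_left.mp h.disjoint hw' hw⟩
      · exact Or.inr ⟨fun hu' => Set.disjoint_left.mp h.disjoint hu' hu, hw⟩
    have hsingle : s.filter (· ∈ s(u, w)) = {u} ∨ s.filter (· ∈ s(u, w)) = {w} := by
      rcases hsep with ⟨hu, hw⟩ | ⟨hu, hw⟩
      · left; ext x; simp only [mem_filter, Sym2.mem_iff, mem_singleton]; grind
      · right; ext x; simp only [mem_filter, Sym2.mem_iff, mem_singleton]; grind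
    rcases hsingle with h1 | h1 <;> rw [h1, sum_singleton]

theorem IsBipartiteWith.two_mul_card_le_card_edgeFinset_add_one {s t : Finset V}
    (h : G.IsBipartiteWith s t) {p : V} (hp : p ∈ s) (hpdeg : G.degree p = 1)
    (hdeg : ∀ v ∈ s.erase p, 2 ≤ G.degree v) :
    2 * #s ≤ #G.edgeFinset + 1 := by
  have hsum := isBipartiteWith_sum_degrees_eq_card_edges h
  rw [← sum_erase_add s _ hp, hpdeg] at hsum
  have hle := card_nsmul_le_sum _ _ _ hdeg
  rw [card_erase_of_mem hp, smul_eq_mul] at hle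
  have := card_pos.mpr ⟨p, hp⟩
  omega

end SimpleGraph

namespace LocalAntimagic

open SimpleGraph

variable {V : Type*} [Fintype V] [DecidableEq V] {G : SimpleGraph V} [DecidableRel G.Adj]
  {f : Sym2 V → ℕ}

theorem IsLocalAntimagic.sum_edgeFinset_mul_two (hf : IsLocalAntimagic G f) :
    (∑ e ∈ G.edgeFinset, f e) * 2 = #G.edgeFinset * (#G.edgeFinset + 1) := by
  rw [← sum_Icc_id_mul_two]
  congr 1
  exact sum_nbij f (fun e he => by simpa using hf.1.mapsTo (by simpa using he))
    (by simpa using hf.1.injOn) (by simpa using hf.1.surjOn) (fun _ _ => rfl)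

theorem IsLocalAntimagic.mul_card_mul_two_of_isBipartiteWith (hf : IsLocalAntimagic G f)
    {s t : Finset V} (h : G.IsBipartiteWith s t) {a : ℕ} (hs : ∀ v ∈ s, inducedSum G f v = a) :
    a * #s * 2 = #G.edgeFinset * (#G.edgeFinset + 1) := by
  rw [← hf.sum_edgeFinset_mul_two, ← h.sum_sum_incidenceFinset, mul_comm a, ← smul_eq_mul #s a,
    ← sum_const]
  exact congrArg (· * 2) (sum_congr rfl fun v hv => (hs v hv).symm)

theorem inducedSum_eq_zero_of_degree_eq_zero {v : V} (hv : G.degree v = 0) :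
    inducedSum G f v = 0 := by
  rw [inducedSum, card_eq_zero.mp ((G.card_incidenceFinset_eq_degree v).trans hv), sum_empty]

theorem exists_inducedSum_eq_of_degree_eq_one {v : V} (hv : G.degree v = 1) :
    ∃ e ∈ G.edgeSet, inducedSum G f v = f e := by
  obtain ⟨e, he⟩ := card_eq_one.mp ((G.card_incidenceFinset_eq_degree v).trans hv)
  refine ⟨e, G.incidenceSet_subset v ((mem_incidenceFinset G v e).mp (he ▸ mem_singleton_self e)),
    ?_⟩
  rw [inducedSum, he, sum_singleton]

theorem three_le_colorCount (heven : Even #G.edgeFinset)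
    (hpend : #(univ.filter fun v => G.degree v = 1) = 1) (hf : IsLocalAntimagic G f) :
    3 ≤ colorCount G f := by
  by_contra! hlt
  set q := #G.edgeFinset
  obtain ⟨p, hp⟩ := card_eq_one.mp hpend
  have hpendant : ∀ v, G.degree v = 1 ↔ v = p := fun v => by
    simpa using congrArg (v ∈ ·) hp
  obtain ⟨e₀, he₀, hpe₀⟩ := exists_inducedSum_eq_of_degree_eq_one (f := f) ((hpendant p).mpr rfl)
  set a := inducedSum G f p
  have ha : 1 ≤ a ∧ a ≤ q := by simpa [hpe₀] using hf.1.mapsTo he₀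
  set A := univ.filter (inducedSum G f · = a)
  have hpA : p ∈ A := mem_filter.mpr ⟨mem_univ p, rfl⟩
  have hbip : G.IsBipartiteWith ↑A ↑(univ.filter (inducedSum G f · ≠ a)) :=
    isBipartiteWith_filter_eq_filter_ne _ hf.2 (by unfold colorCount at hlt; omega)
      (mem_image_of_mem _ (mem_univ p))
  have hlabels := hf.mul_card_mul_two_of_isBipartiteWith hbip fun v hv => (mem_filter.mp hv).2
  have hdeg : ∀ v ∈ A.erase p, 2 ≤ G.degree v := by
    intro v hv
    obtain ⟨hvp, hvA⟩ := mem_erase.mp hv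
    have h0 : G.degree v ≠ 0 := fun h0 => by
      have := (mem_filter.mp hvA).2
      rw [inducedSum_eq_zero_of_degree_eq_zero h0] at this
      omega
    have h1 : G.degree v ≠ 1 := fun h1 => hvp ((hpendant v).mp h1)
    omega
  have hcard_le := hbip.two_mul_card_le_card_edgeFinset_add_one hpA ((hpendant p).mpr rfl) hdeg
  have hcard_ge : q + 1 ≤ 2 * #A := by
    refine Nat.le_of_mul_le_mul_left ?_ (show 0 < q by omega)
    calc q * (q + 1) = a * #A * 2 := hlabels.symm
      _ ≤ q * (2 * #A) := by nlinarith
  obtain ⟨k, hk⟩ := heven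
  omega

end LocalAntimagic

open LocalAntimagic in
theorem stmt3_general {V : Type*} [Fintype V] [DecidableEq V] (G : SimpleGraph V)
    [DecidableRel G.Adj]
    (heven : Even G.edgeFinset.card)
    (hpend : (Finset.univ.filter fun v => G.degree v = 1).card = 1) :
    3 ≤ chiLA G :=
  le_sInf fun _ ⟨_, hf, hn⟩ => hn ▸ by exact_mod_cast three_le_colorCount heven hpend hf

open LocalAntimagic in
/-- a connected bipartite graph of even size with exactly one
pendant vertex has `χ_la ≥ 3`. -/
theorem stmt3 {V : Type*} [Fintype V] [DecidableEq V] (G : SimpleGraph V)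
    [DecidableRel G.Adj] (hconn : G.Connected) (hbip : G.Colorable 2)
    (heven : Even G.edgeFinset.card)
    (hpend : (Finset.univ.filter fun v => G.degree v = 1).card = 1) :
    3 ≤ chiLA G :=
  stmt3_general G heven hpend
end

section
/- For a cycle C_m = v₀v₁⋯v_{m−1}v₀ with m ≥ 3, the edge labeling f defined by f(v_jv_{j+1}) = (j+2)/2 for even j and f(v_jv_{j+1}) = m − (j−1)/2 for odd j (indices mod m) is a bijection onto {1,...,m}, and induces vertex sums f⁺(v₀) = ⌊m/2⌋ + 2, f⁺(v_j) = m + 1 for odd j, and f⁺(v_j) = m + 2 for even j > 0. In particular, f is a local antimagic labeling of C_m with exactly 3 distinct induced labels. -/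
open Finset

/-!
Label the edge `v_j v_{j+1}` by the `j`-th term of the zigzag sequence `1, m, 2, m - 1, 3, …`,
which lists `{1, …, m}` without repetition. Two consecutive terms of the zigzag sum to `m + 1`
when the first one sits at an even position and to `m + 2` otherwise, so the vertex `v_j` with
`0 < j` gets `m + 1` or `m + 2` according to the parity of `j`. The wrap-around vertex `v_0` sees
the first and the last term, whose sum is `m / 2 + 2 < m + 1`, so adjacent vertices always differ.
-/

namespace LocalAntimagic

-- Off the cycle both conditions fail and the label is junk `0`;
-- on a cycle edge exactly one holds as soon as `3 ≤ m`.
def succEdgeLabel {m : ℕ} (g : ZMod m → ℕ) : Sym2 (ZMod m) → ℕ :=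
  Sym2.lift ⟨fun a b => (if b = a + 1 then g a else 0) + (if a = b + 1 then g b else 0),
    fun _ _ => add_comm _ _⟩

def zigzagLabel (m j : ℕ) : ℕ := if Even j then j / 2 + 1 else m - (j - 1) / 2

def zigzagEdgeLabel (m : ℕ) : Sym2 (ZMod m) → ℕ := succEdgeLabel fun a => zigzagLabel m a.val

lemma bijOn_zigzagLabel (m : ℕ) : Set.BijOn (zigzagLabel m) (Set.Iio m) (Set.Icc 1 m) := by
  refine ⟨fun j hj => ?_, fun i hi j hj hij => ?_, fun n hn => ?_⟩
  · simp only [Set.mem_Iio, Set.mem_Icc, zigzagLabel, Nat.even_iff] at hj ⊢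
    split_ifs <;> omega
  · simp only [Set.mem_Iio, zigzagLabel, Nat.even_iff] at hi hj hij
    split_ifs at hij <;> omega
  · simp only [Set.mem_Icc] at hn
    by_cases hsmall : 2 * n ≤ m + 1
    · exact ⟨2 * (n - 1), by simp only [Set.mem_Iio]; omega, by
        simp only [zigzagLabel, Nat.even_iff]; split_ifs <;> omega⟩
    · exact ⟨2 * (m - n) + 1, by simp only [Set.mem_Iio]; omega, by
        simp only [zigzagLabel, Nat.even_iff]; split_ifs <;> omega⟩

lemma zigzagLabel_add_zigzagLabel_succ {m j : ℕ} (hj : j < m) :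
    zigzagLabel m j + zigzagLabel m (j + 1) = if Even j then m + 1 else m + 2 := by
  simp only [zigzagLabel, Nat.even_add_one]
  split_ifs with h <;> simp only [Nat.even_iff] at h <;> omega

lemma zigzagLabel_pred_add_zigzagLabel_zero (m : ℕ) :
    zigzagLabel m (m - 1) + zigzagLabel m 0 = m / 2 + 2 := by
  simp only [zigzagLabel, Nat.even_iff]
  split_ifs <;> omega

section ThreeLe

variable {m : ℕ} (hm : 3 ≤ m)
include hm

lemma two_ne_zero_of_three_le : (2 : ZMod m) ≠ 0 := by
  intro h
  have hdvd : m ∣ 2 := (ZMod.natCast_eq_zero_iff 2 m).mp (by exact_mod_cast h)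
  have := Nat.le_of_dvd two_pos hdvd
  omega

lemma add_one_ne_self (a : ZMod m) : a + 1 ≠ a := by
  have : Fact (1 < m) := ⟨by omega⟩
  simp

lemma mk_add_one_injective : Function.Injective fun a : ZMod m => s(a, a + 1) := by
  intro a b h
  rcases Sym2.eq_iff.mp h with ⟨hab, -⟩ | ⟨hab, hba⟩
  · exact hab
  · refine absurd ?_ (two_ne_zero_of_three_le hm)
    linear_combination hba - hab

lemma succEdgeLabel_mk (g : ZMod m → ℕ) (a : ZMod m) : succEdgeLabel g s(a, a + 1) = g a := by
  have : a ≠ a + 1 + 1 := fun h => two_ne_zero_of_three_le hm (by linear_combination -h)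
  simp [succEdgeLabel, this]

end ThreeLe

variable {m : ℕ} [NeZero m]

lemma bijOn_val : Set.BijOn (ZMod.val : ZMod m → ℕ) Set.univ (Set.Iio m) :=
  ⟨fun a _ => a.val_lt, (ZMod.val_injective m).injOn,
    fun j hj => ⟨j, trivial, ZMod.val_natCast_of_lt hj⟩⟩

section Cycle

variable (hm : 3 ≤ m)
include hm

lemma cycle_adj_iff {u v : ZMod m} : (cycle m).Adj u v ↔ v = u + 1 ∨ u = v + 1 := by
  change u ≠ v ∧ (u - v ∈ ({1} : Finset (ZMod m)) ∨ v - u ∈ ({1} : Finset (ZMod m))) ↔ _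
  simp only [Finset.mem_singleton, sub_eq_iff_eq_add']
  constructor
  · rintro ⟨-, h | h⟩ <;> simp [h]
  · rintro (rfl | rfl)
    · exact ⟨(add_one_ne_self hm u).symm, Or.inr rfl⟩
    · exact ⟨add_one_ne_self hm v, Or.inl rfl⟩

lemma range_mk_add_one : Set.range (fun a : ZMod m => s(a, a + 1)) = (cycle m).edgeSet := by
  ext e
  induction e using Sym2.ind with
  | h x y =>
    simp only [Set.mem_range, SimpleGraph.mem_edgeSet, cycle_adj_iff hm, Sym2.eq_iff]
    constructor
    · rintro ⟨a, ⟨rfl, rfl⟩ | ⟨rfl, rfl⟩⟩ <;> simp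
    · rintro (rfl | rfl)
      · exact ⟨x, Or.inl ⟨rfl, rfl⟩⟩
      · exact ⟨y, Or.inr ⟨rfl, rfl⟩⟩

lemma card_edgeFinset_cycle : (cycle m).edgeFinset.card = m := by
  have : (cycle m).edgeFinset = Finset.univ.image fun a : ZMod m => s(a, a + 1) := by
    ext e
    simp [← range_mk_add_one hm]
  rw [this, Finset.card_image_of_injective _ (mk_add_one_injective hm), Finset.card_univ,
    ZMod.card]

lemma incidenceFinset_cycle (v : ZMod m) :
    (cycle m).incidenceFinset v = {s(v - 1, v), s(v, v + 1)} := by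
  ext e
  induction e using Sym2.ind with
  | h x y =>
    simp only [SimpleGraph.mem_incidenceFinset, SimpleGraph.mk'_mem_incidenceSet_iff,
      cycle_adj_iff hm, Finset.mem_insert, Finset.mem_singleton, Sym2.eq_iff]
    constructor
    · rintro ⟨rfl | rfl, rfl | rfl⟩ <;> simp
    · rintro ((⟨rfl, rfl⟩ | ⟨rfl, rfl⟩) | (⟨rfl, rfl⟩ | ⟨rfl, rfl⟩)) <;> simp

lemma inducedSum_succEdgeLabel (g : ZMod m → ℕ) (v : ZMod m) :
    inducedSum (cycle m) (succEdgeLabel g) v = g (v - 1) + g v := by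
  have hne : s(v - 1, v) ≠ s(v, v + 1) := by
    have hv : v - 1 ≠ v := fun h => add_one_ne_self hm (v - 1) (by rw [sub_add_cancel, h])
    simpa using (mk_add_one_injective hm).ne hv
  rw [inducedSum, incidenceFinset_cycle hm, Finset.sum_pair hne, succEdgeLabel_mk hm]
  simpa using succEdgeLabel_mk hm g (v - 1)

lemma bijOn_succEdgeLabel {g : ZMod m → ℕ} (hg : Set.BijOn g Set.univ (Set.Icc 1 m)) :
    Set.BijOn (succEdgeLabel g) (cycle m).edgeSet (Set.Icc 1 m) := by
  rw [← range_mk_add_one hm, ← Set.image_univ,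
    ← Set.bijOn_comp_iff (mk_add_one_injective hm).injOn]
  exact hg.congr fun a _ => (succEdgeLabel_mk hm g a).symm

lemma inducedSum_zigzagEdgeLabel_natCast {j : ℕ} (hj : j < m) :
    inducedSum (cycle m) (zigzagEdgeLabel m) j =
      if j = 0 then m / 2 + 2 else if Even j then m + 2 else m + 1 := by
  rw [zigzagEdgeLabel, inducedSum_succEdgeLabel hm]
  cases j with
  | zero =>
    have hpred : ((0 : ℕ) : ZMod m) - 1 = ((m - 1 : ℕ) : ZMod m) := by
      rw [Nat.cast_sub (by omega), ZMod.natCast_self]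
      simp
    rw [hpred, ZMod.val_natCast_of_lt (by omega), ZMod.val_natCast_of_lt hj]
    simpa using zigzagLabel_pred_add_zigzagLabel_zero m
  | succ i =>
    have hpred : ((i + 1 : ℕ) : ZMod m) - 1 = (i : ℕ) := by
      push_cast
      ring
    rw [hpred, ZMod.val_natCast_of_lt (by omega), ZMod.val_natCast_of_lt hj,
      zigzagLabel_add_zigzagLabel_succ (by omega)]
    simp only [Nat.add_one_ne_zero, if_false, Nat.even_add_one, ite_not]

lemma inducedSum_zigzagEdgeLabel_ne_add_one (u : ZMod m) :
    inducedSum (cycle m) (zigzagEdgeLabel m) u ≠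
      inducedSum (cycle m) (zigzagEdgeLabel m) (u + 1) := by
  obtain ⟨j, hj, rfl⟩ : ∃ j < m, (j : ZMod m) = u :=
    ⟨u.val, u.val_lt, ZMod.natCast_zmod_val u⟩
  have hsucc : (j : ZMod m) + 1 = ((j + 1) % m : ℕ) := by
    rw [ZMod.natCast_mod]
    push_cast
    rfl
  rw [hsucc, inducedSum_zigzagEdgeLabel_natCast hm hj,
    inducedSum_zigzagEdgeLabel_natCast hm (Nat.mod_lt _ (by omega))]
  rcases Nat.lt_or_ge (j + 1) m with h | h
  · rw [Nat.mod_eq_of_lt h]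
    simp only [Nat.add_one_ne_zero, if_false, Nat.even_add_one, Nat.even_iff]
    split_ifs <;> omega
  · rw [show j + 1 = m by omega, Nat.mod_self]
    simp only [Nat.even_iff]
    split_ifs <;> omega

lemma isLocalAntimagic_zigzagEdgeLabel : IsLocalAntimagic (cycle m) (zigzagEdgeLabel m) := by
  refine ⟨?_, fun u v huv => ?_⟩
  · rw [card_edgeFinset_cycle hm]
    exact bijOn_succEdgeLabel hm ((bijOn_zigzagLabel m).comp bijOn_val)
  rcases (cycle_adj_iff hm).mp huv with rfl | rfl
  · exact inducedSum_zigzagEdgeLabel_ne_add_one hm u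
  · exact (inducedSum_zigzagEdgeLabel_ne_add_one hm v).symm

lemma image_inducedSum_zigzagEdgeLabel :
    Finset.univ.image (inducedSum (cycle m) (zigzagEdgeLabel m)) = {m / 2 + 2, m + 1, m + 2} := by
  ext n
  simp only [Finset.mem_image, Finset.mem_univ, true_and, Finset.mem_insert,
    Finset.mem_singleton]
  constructor
  · rintro ⟨v, rfl⟩
    rw [← ZMod.natCast_zmod_val v, inducedSum_zigzagEdgeLabel_natCast hm v.val_lt]
    split_ifs <;> simp
  · have h (j : ℕ) (hj : j < m) := inducedSum_zigzagEdgeLabel_natCast hm hj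
    rintro (rfl | rfl | rfl)
    · exact ⟨_, (h 0 (by omega)).trans (by simp)⟩
    · exact ⟨_, (h 1 (by omega)).trans (by simp)⟩
    · exact ⟨_, (h 2 (by omega)).trans (by simp)⟩

lemma colorCount_zigzagEdgeLabel : colorCount (cycle m) (zigzagEdgeLabel m) = 3 := by
  rw [colorCount, image_inducedSum_zigzagEdgeLabel hm]
  exact Finset.card_eq_three.mpr ⟨_, _, _, by omega, by omega, by omega, rfl⟩

end Cycle

end LocalAntimagic

open LocalAntimagic in
/-- the `C`-labeling of the cycle `C_m` is a local antimagic
labeling (bijective onto `{1,…,m}`) with the stated induced sums and exactly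
3 distinct induced labels. -/
theorem stmt10 (m : ℕ) [NeZero m] (hm : 3 ≤ m) :
    (cycle m).edgeFinset.card = m ∧
    ∃ f : Sym2 (ZMod m) → ℕ,
      (∀ j : Fin m, f s(((j : ℕ) : ZMod m), ((j : ℕ) : ZMod m) + 1) =
        if Even (j : ℕ) then (j : ℕ) / 2 + 1 else m - ((j : ℕ) - 1) / 2) ∧
      IsLocalAntimagic (cycle m) f ∧
      inducedSum (cycle m) f 0 = m / 2 + 2 ∧
      (∀ j : Fin m, Odd (j : ℕ) → inducedSum (cycle m) f ((j : ℕ) : ZMod m) = m + 1) ∧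
      (∀ j : Fin m, 0 < (j : ℕ) → Even (j : ℕ) →
        inducedSum (cycle m) f ((j : ℕ) : ZMod m) = m + 2) ∧
      colorCount (cycle m) f = 3 := by
  refine ⟨card_edgeFinset_cycle hm, zigzagEdgeLabel m, fun j => ?_,
    isLocalAntimagic_zigzagEdgeLabel hm, ?_, fun j hodd => ?_, fun j hpos heven => ?_,
    colorCount_zigzagEdgeLabel hm⟩
  · rw [zigzagEdgeLabel, succEdgeLabel_mk hm, ZMod.val_natCast_of_lt j.isLt, zigzagLabel]
  · simpa using inducedSum_zigzagEdgeLabel_natCast hm (j := 0) (by omega)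
  · rw [inducedSum_zigzagEdgeLabel_natCast hm j.isLt, if_neg hodd.pos.ne',
      if_neg (Nat.not_even_iff_odd.mpr hodd)]
  · rw [inducedSum_zigzagEdgeLabel_natCast hm j.isLt, if_neg hpos.ne', if_pos heven]
end
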